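/- Let n have exactly one prime factor p (i.e., n = p^l with l ≥ 1). Then every α ∈ V_n ∩ (ℤ_{≥0})^n can be written as Σ_{i=0}^{n_p - 1} c_i v^(p)_i with non-negative integers c_i; in fact c_i = α_i. -/

import Mathlib

/-!
The polynomial `f = ∑ α_m X^m` has degree `< n` and vanishes at `ζ`, so it is divisible by the
cyclotomic polynomial `Φ_n = ∑_{j<p} X^{(n/p) j}`, of degree `n - n/p`. The quotient `g` therefore
has degree `< n/p`, and the coefficients of `f = Φ_n g` are those of `g` repeated `p` times:
`α_m = g_{m mod n/p}`.
-/

/-- The `k`-th standard basis vector of `ℤ^n`. -/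
def stdVec (n : ℕ) (k : ℕ) : Fin n → ℤ := fun m => if (m : ℕ) = k then 1 else 0

/-- `v^(d)_i = ∑_{j=0}^{d-1} e_{i + (n/d) j}` in `ℤ^n`. -/
def cycVec (n d : ℕ) (i : ℕ) : Fin n → ℤ := ∑ j ∈ Finset.range d, stdVec n (i + (n / d) * j)

open Finset Polynomial

namespace Polynomial

theorem coeff_geom_sum_X_pow_mul {R : Type*} [Semiring R] {a : ℕ} {g : R[X]}
    (hg : g.natDegree < a) (m k : ℕ) :
    ((∑ j ∈ range m, (X ^ a) ^ j) * g).coeff k = if k < a * m then g.coeff (k % a) else 0 := by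
  induction m with
  | zero => simp
  | succ m ih =>
    rw [sum_range_succ, add_mul, coeff_add, ih, ← pow_mul, coeff_X_pow_mul']
    rcases lt_or_ge k (a * m) with hk | hk
    · rw [if_pos hk, if_neg (by omega), if_pos (by nlinarith), add_zero]
    rw [if_neg (by omega), if_pos hk, zero_add]
    split_ifs with hk'
    · rw [← Nat.sub_mul_mod hk, Nat.mod_eq_of_lt (by rw [mul_add] at hk'; omega)]
    · exact coeff_eq_zero_of_natDegree_lt (by rw [mul_add] at hk'; omega)

theorem coeff_eq_coeff_mod_of_cyclotomic_prime_pow_dvd {R : Type*} [CommRing R] [Nontrivial R]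
    {p l : ℕ} (hp : p.Prime) {f : R[X]} (hdvd : cyclotomic (p ^ (l + 1)) R ∣ f)
    (hdeg : f.natDegree < p ^ (l + 1)) {k : ℕ} (hk : k < p ^ (l + 1)) :
    f.coeff k = f.coeff (k % p ^ l) := by
  obtain ⟨g, rfl⟩ := hdvd
  have hpl : 0 < p ^ l := pow_pos hp.pos l
  have hg : g.natDegree < p ^ l := by
    by_contra! hge
    have hg0 : g ≠ 0 := by rintro rfl; rw [natDegree_zero] at hge; omega
    rw [(cyclotomic.monic _ R).natDegree_mul' hg0, natDegree_cyclotomic,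
      Nat.totient_prime_pow_succ hp, pow_succ] at hdeg
    have : p ^ l * (p - 1) + p ^ l = p ^ l * p := by
      rw [← Nat.mul_succ, Nat.succ_eq_add_one, Nat.sub_add_cancel hp.one_le]
    omega
  rw [cyclotomic_prime_pow_eq_geom_sum hp, coeff_geom_sum_X_pow_mul hg,
    coeff_geom_sum_X_pow_mul hg, ← pow_succ, if_pos hk,
    if_pos ((Nat.mod_le k _).trans_lt hk), Nat.mod_mod]

end Polynomial

theorem IsPrimitiveRoot.eq_of_modEq_of_sum_mul_pow_eq_zero {K : Type*} [Field K] [CharZero K]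
    {p l : ℕ} (hp : p.Prime) {ζ : K} (hζ : IsPrimitiveRoot ζ (p ^ (l + 1)))
    {α : Fin (p ^ (l + 1)) → ℤ} (hα : ∑ m, (α m : K) * ζ ^ (m : ℕ) = 0)
    {m m' : Fin (p ^ (l + 1))} (hmm' : (m : ℕ) ≡ m' [MOD p ^ l]) : α m = α m' := by
  have hn : 0 < p ^ (l + 1) := pow_pos hp.pos _
  have hroot : aeval ζ (ofFn _ α) = 0 := by
    simpa [ofFn_eq_sum_monomial, aeval_monomial] using hα
  have hdvd : cyclotomic (p ^ (l + 1)) ℤ ∣ ofFn _ α := by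
    rw [cyclotomic_eq_minpoly hζ hn]
    exact minpoly.isIntegrallyClosed_dvd (hζ.isIntegral hn) hroot
  have hcoeff (k : Fin (p ^ (l + 1))) : α k = (ofFn _ α).coeff (k % p ^ l) := by
    rw [← coeff_eq_coeff_mod_of_cyclotomic_prime_pow_dvd hp hdvd (ofFn_natDegree_lt hn _) k.isLt,
      ofFn_coeff_eq_val_of_lt _ k.isLt]
  rw [hcoeff, hcoeff, hmm']

theorem cycVec_apply {n p i : ℕ} (hpn : p ∣ n) (hi : i < n / p) (m : Fin n) :
    cycVec n p i m = if (m : ℕ) % (n / p) = i then 1 else 0 := by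
  have ha : 0 < n / p := by omega
  have hmp : (m : ℕ) / (n / p) < p :=
    Nat.div_lt_of_lt_mul (by rw [Nat.div_mul_cancel hpn]; exact m.isLt)
  have hdigits (j : ℕ) : (m : ℕ) = i + n / p * j ↔ (m : ℕ) % (n / p) = i ∧ j = m / (n / p) := by
    constructor
    · intro h
      rw [h, Nat.add_mul_mod_self_left, Nat.add_mul_div_left _ _ ha, Nat.mod_eq_of_lt hi,
        Nat.div_eq_of_lt hi, zero_add]
      exact ⟨rfl, rfl⟩
    · rintro ⟨h, rfl⟩
      rw [← h, Nat.mod_add_div]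
  by_cases h : (m : ℕ) % (n / p) = i <;> simp [cycVec, stdVec, hdigits, h, hmp]

theorem sum_smul_cycVec_apply {n p : ℕ} (hpn : p ∣ n) (c : ℕ → ℤ) (m : Fin n) :
    (∑ i ∈ range (n / p), c i • cycVec n p i) m = c (m % (n / p)) := by
  have ha : 0 < n / p := Nat.pos_of_ne_zero fun h => by
    have := Nat.div_mul_cancel hpn
    rw [h, zero_mul] at this
    exact (this ▸ m).elim0
  simp only [Finset.sum_apply, Pi.smul_apply, smul_eq_mul]
  rw [Finset.sum_congr rfl fun i hi => by rw [cycVec_apply hpn (mem_range.1 hi)]]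
  simp [Nat.mod_lt _ ha]

/-- If `n = p^l` is a prime power, every `α ∈ V_n ∩ (ℤ_{≥0})^n` is a `ℤ_{≥0}`-combination
`∑_{i<n_p} c_i v^(p)_i`, with in fact `c_i = α_i`. -/
theorem stmt7 (n p l : ℕ) (hp : p.Prime) (hl : 1 ≤ l) (hn : n = p ^ l)
    (ζ : ℂ) (hζ : IsPrimitiveRoot ζ n)
    (α : Fin n → ℤ) (hpos : ∀ m : Fin n, 0 ≤ α m)
    (hV : ∑ m : Fin n, (α m : ℂ) * ζ ^ (m : ℕ) = 0) :
    ∃ c : ℕ → ℕ,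
      (∀ i : Fin n, (i : ℕ) < n / p → (c (i : ℕ) : ℤ) = α i) ∧
      α = ∑ i ∈ Finset.range (n / p), (c i : ℤ) • cycVec n p i := by
  obtain ⟨l, rfl⟩ : ∃ k, l = k + 1 := ⟨l - 1, by omega⟩
  subst hn
  have hnp : p ^ (l + 1) / p = p ^ l := by rw [pow_succ, Nat.mul_div_cancel _ hp.pos]
  refine ⟨fun i => if h : i < p ^ (l + 1) then (α ⟨i, h⟩).toNat else 0,
    fun i _ => by simp [hpos], funext fun m => ?_⟩
  rw [sum_smul_cycVec_apply (dvd_pow_self p l.succ_ne_zero), hnp]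
  have hm : (m : ℕ) % p ^ l < p ^ (l + 1) := (Nat.mod_le _ _).trans_lt m.isLt
  simp only [dif_pos hm, Int.toNat_of_nonneg (hpos _)]
  exact hζ.eq_of_modEq_of_sum_mul_pow_eq_zero hp hV (Nat.mod_modEq _ _).symm
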